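/- arXiv:2309.16906 — 4 statements merged into one kernel-verified Lean document; each statement's English description precedes it below -/
import Mathlib

section
/- Let X and Y be Banach spaces, B the open ball of radius R > 0 around 0 in X, and f : B → Y continuous and Gâteaux-differentiable with f(0) = 0. Assume for each x ∈ B the derivative Df(x) has a right-inverse L(x) ∈ L(Y,X) (i.e. Df(x) ∘ L(x) = id_Y), and that sup{‖L(x)‖ : x ∈ B} < m for some m. Then for every y ∈ Y with ‖y‖ < R/m there exists x ∈ B with f(x) = y and ‖x‖ ≤ m‖y‖. -/
/-!
Apply Ekeland's variational principle to `x ↦ ‖f x - y‖` on a closed ball slightly inside `B`,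
with slope `1 / m`, starting from `0`. The resulting point `z` satisfies `‖z‖ ≤ m ‖y‖`, so it is
interior, and no point improves on it by more than `1 / m` times the distance. Moving from `z`
in the direction `v = L z (y - f z)`, which the derivative sends to `y - f z`, decreases
`‖f - y‖` at rate `‖f z - y‖` while costing `‖v‖ / m ≤ (m₀ / m) ‖f z - y‖` with `m₀ < m`;
hence `f z = y`.
-/

open Filter Metric

/-- Gâteaux differentiability of `f` at `x` with derivative `D`. -/
def GateauxAt {X Y : Type*} [NormedAddCommGroup X] [NormedSpace ℝ X]
    [NormedAddCommGroup Y] [NormedSpace ℝ Y] (f : X → Y) (D : X →L[ℝ] Y) (x : X) : Prop :=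
  ∀ v : X, Tendsto (fun t : ℝ => t⁻¹ • (f (x + t • v) - f x)) (nhdsWithin 0 {0}ᶜ) (nhds (D v))

open Topology

theorem exists_forall_le_add_of_bddBelow {α : Type*} {t : Set α} {g : α → ℝ} (ht : t.Nonempty)
    (hbdd : BddBelow (g '' t)) {ε : ℝ} (hε : 0 < ε) : ∃ v ∈ t, ∀ x ∈ t, g v ≤ g x + ε := by
  obtain ⟨_, ⟨v, hv, rfl⟩, hlt⟩ :=
    exists_lt_of_csInf_lt (ht.image g) (lt_add_of_pos_right (sInf (g '' t)) hε)
  exact ⟨v, hv, fun x hx => by linarith [csInf_le hbdd (Set.mem_image_of_mem g hx)]⟩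

section Ekeland

variable {X : Type*} [PseudoMetricSpace X] {s : Set X} {g : X → ℝ} {δ : ℝ} {u v x : X}

def ekelandSet (s : Set X) (g : X → ℝ) (δ : ℝ) (u : X) : Set X :=
  {x ∈ s | g x + δ * dist x u ≤ g u}

theorem self_mem_ekelandSet (hu : u ∈ s) : u ∈ ekelandSet s g δ u :=
  ⟨hu, by simp⟩

theorem ekelandSet_subset (hδ : 0 ≤ δ) (hv : v ∈ ekelandSet s g δ u) :
    ekelandSet s g δ v ⊆ ekelandSet s g δ u := fun x hx =>
  ⟨hx.1, by nlinarith [hv.2, hx.2, dist_triangle x v u]⟩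

theorem isClosed_ekelandSet (hs : IsClosed s) (hg : LowerSemicontinuousOn g s) :
    IsClosed (ekelandSet s g δ u) := by
  have hlsc : LowerSemicontinuousOn (fun x => g x + δ * dist x u) s :=
    hg.add (by fun_prop : Continuous fun x => δ * dist x u).continuousOn.lowerSemicontinuousOn
  obtain ⟨c, hc, hsc⟩ := lowerSemicontinuousOn_iff_preimage_Iic.1 hlsc (g u)
  exact (hsc ▸ hs.inter hc : IsClosed (s ∩ _))

theorem dist_le_of_mem_ekelandSet (hδ : 0 < δ) {ε : ℝ} (hv : v ∈ ekelandSet s g δ u)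
    (hmin : ∀ x ∈ ekelandSet s g δ u, g v ≤ g x + δ * ε) (hx : x ∈ ekelandSet s g δ v) :
    dist x v ≤ ε := by
  have := hmin x (ekelandSet_subset hδ.le hv hx)
  exact le_of_mul_le_mul_left (by linarith [hx.2]) hδ

theorem ekeland_variational_principle [CompleteSpace X] (hs : IsClosed s)
    (hg : LowerSemicontinuousOn g s) (hbdd : BddBelow (g '' s)) (hδ : 0 < δ) {x₀ : X}
    (hx₀ : x₀ ∈ s) :
    ∃ z ∈ s, g z + δ * dist z x₀ ≤ g x₀ ∧ ∀ x ∈ s, g z ≤ g x + δ * dist x z := by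
  set T := ekelandSet s g δ
  have hnext (n : ℕ) (u : X) :
      ∃ v, u ∈ s → v ∈ T u ∧ ∀ x ∈ T u, g v ≤ g x + δ * (1 / (n + 1)) := by
    by_cases hu : u ∈ s
    · obtain ⟨v, hv, hmin⟩ := exists_forall_le_add_of_bddBelow ⟨u, self_mem_ekelandSet hu⟩
        (hbdd.mono (Set.image_mono fun _ hx => hx.1)) (by positivity : 0 < δ * (1 / (n + 1)))
      exact ⟨v, fun _ => ⟨hv, hmin⟩⟩
    · exact ⟨u, fun h => absurd h hu⟩
  choose F hF using hnext
  let u : ℕ → X := fun n => Nat.rec x₀ F n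
  have hu_mem : ∀ n, u n ∈ s := fun n => by
    induction n with
    | zero => exact hx₀
    | succ n ih => exact ((hF n (u n) ih).1).1
  have hu_succ (n : ℕ) := hF n (u n) (hu_mem n)
  have hanti : Antitone fun n => T (u n) :=
    antitone_nat_of_succ_le fun n => ekelandSet_subset hδ.le (hu_succ n).1
  have hu_T {n k : ℕ} (hnk : n ≤ k) : u k ∈ T (u n) := hanti hnk (self_mem_ekelandSet (hu_mem k))
  have hsmall (n : ℕ) {x : X} (hx : x ∈ T (u (n + 1))) : dist x (u (n + 1)) ≤ 1 / (n + 1) :=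
    dist_le_of_mem_ekelandSet hδ (hu_succ n).1 (hu_succ n).2 hx
  have hcauchy : CauchySeq u := by
    refine Metric.cauchySeq_iff'.2 fun η hη => ?_
    obtain ⟨n, hn⟩ := exists_nat_one_div_lt hη
    exact ⟨n + 1, fun k hk => (hsmall n (hu_T hk)).trans_lt hn⟩
  obtain ⟨z, hz⟩ := cauchySeq_tendsto_of_complete hcauchy
  have hzT (n : ℕ) : z ∈ T (u n) :=
    (isClosed_ekelandSet hs hg).mem_of_tendsto hz (eventually_atTop.2 ⟨n, fun _ => hu_T⟩)
  refine ⟨z, (hzT 0).1, (hzT 0).2, fun x hx => ?_⟩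
  by_contra! hlt
  have hxT (n : ℕ) : x ∈ T (u n) := ekelandSet_subset hδ.le (hzT n) ⟨hx, hlt.le⟩
  have hgz (n : ℕ) : g z ≤ g x + δ * (1 / (n + 1)) := by
    have := (hu_succ n).2 x (hxT n)
    nlinarith [(hzT (n + 1)).2, dist_nonneg (x := z) (y := u (n + 1))]
  have hlim : Tendsto (fun n : ℕ => g x + δ * (1 / (n + 1))) atTop (𝓝 (g x)) := by
    simpa using tendsto_const_nhds.add (tendsto_one_div_add_atTop_nhds_zero_nat.const_mul δ)
  nlinarith [ge_of_tendsto' hlim hgz, dist_nonneg (x := x) (y := z)]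

end Ekeland

theorem GateauxAt.norm_sub_le_of_eventually_le {X Y : Type*} [NormedAddCommGroup X]
    [NormedSpace ℝ X] [NormedAddCommGroup Y] [NormedSpace ℝ Y] {f : X → Y} {D : X →L[ℝ] Y}
    {z v : X} {y : Y} {δ : ℝ} (hG : GateauxAt f D z) (hv : D v = y - f z)
    (hmin : ∀ᶠ t in 𝓝[>] (0 : ℝ), ‖f z - y‖ ≤ ‖f (z + t • v) - y‖ + δ * ‖t • v‖) :
    ‖f z - y‖ ≤ δ * ‖v‖ := by
  set w : ℝ → Y := fun t => t⁻¹ • (f (z + t • v) - f z)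
  have hw : Tendsto (fun t => ‖w t - D v‖ + δ * ‖v‖) (𝓝[>] 0) (𝓝 (δ * ‖v‖)) := by
    have := ((hG v).mono_left <|
      nhdsWithin_mono 0 fun _ (ht : _ ∈ Set.Ioi 0) => ne_of_gt ht).sub_const (D v)
    simpa only [sub_self, norm_zero, zero_add] using this.norm.add_const (δ * ‖v‖)
  refine ge_of_tendsto hw ?_
  filter_upwards [hmin, Ioo_mem_nhdsGT one_pos] with t hmin_t ⟨ht0, ht1⟩
  have hdecomp : f (z + t • v) - y = (1 - t) • (f z - y) + t • (w t - D v) := by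
    simp only [w, hv, smul_sub, smul_smul, mul_inv_cancel₀ ht0.ne']
    module
  have hstep : ‖f (z + t • v) - y‖ ≤ (1 - t) * ‖f z - y‖ + t * ‖w t - D v‖ := by
    rw [hdecomp, ← norm_smul_of_nonneg (by linarith), ← norm_smul_of_nonneg ht0.le]
    exact norm_add_le _ _
  rw [norm_smul_of_nonneg ht0.le] at hmin_t
  nlinarith

theorem GateauxAt.norm_sub_le_of_mem_nhds {X Y : Type*} [NormedAddCommGroup X]
    [NormedSpace ℝ X] [NormedAddCommGroup Y] [NormedSpace ℝ Y] {f : X → Y} {D : X →L[ℝ] Y}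
    {z v : X} {y : Y} {δ : ℝ} {s : Set X} (hG : GateauxAt f D z) (hv : D v = y - f z)
    (hs : s ∈ 𝓝 z) (hmin : ∀ x ∈ s, ‖f z - y‖ ≤ ‖f x - y‖ + δ * dist x z) :
    ‖f z - y‖ ≤ δ * ‖v‖ := by
  have hseg : Tendsto (fun t : ℝ => z + t • v) (𝓝[>] 0) (𝓝 z) := by
    simpa using (((continuous_id.smul continuous_const).const_add z).tendsto (0 : ℝ)).mono_left
      nhdsWithin_le_nhds
  refine hG.norm_sub_le_of_eventually_le hv ?_
  filter_upwards [hseg.eventually_mem hs] with t ht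
  simpa [dist_eq_norm] using hmin _ ht

/-- Local surjection theorem (Ekeland). -/
theorem stmt_0 {X Y : Type*} [NormedAddCommGroup X] [NormedSpace ℝ X] [CompleteSpace X]
    [NormedAddCommGroup Y] [NormedSpace ℝ Y] [CompleteSpace Y]
    (R m : ℝ) (hR : 0 < R)
    (f : X → Y) (hf0 : f 0 = 0)
    (hfc : ContinuousOn f (ball (0 : X) R))
    (Df : X → X →L[ℝ] Y)
    (hG : ∀ x ∈ ball (0 : X) R, GateauxAt f (Df x) x)
    (L : X → Y →L[ℝ] X)
    (hright : ∀ x ∈ ball (0 : X) R, ∀ k : Y, Df x (L x k) = k)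
    (hsup : ∃ m₀ < m, ∀ x ∈ ball (0 : X) R, ‖L x‖ ≤ m₀) :
    ∀ y : Y, ‖y‖ < R / m → ∃ x ∈ ball (0 : X) R, f x = y ∧ ‖x‖ ≤ m * ‖y‖ := by
  obtain ⟨m₀, hm₀m, hL⟩ := hsup
  intro y hy
  have hm : 0 < m := ((norm_nonneg _).trans (hL 0 (mem_ball_self hR))).trans_lt hm₀m
  have hmy : m * ‖y‖ < R := by rwa [lt_div_iff₀ hm, mul_comm] at hy
  obtain ⟨r, hmyr, hrR⟩ := exists_between hmy
  obtain ⟨z, -, hz₀, hzmin⟩ := ekeland_variational_principle (g := fun x => ‖f x - y‖)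
    isClosed_closedBall
    ((hfc.mono (closedBall_subset_ball hrR)).sub continuousOn_const).norm.lowerSemicontinuousOn
    ⟨0, by rintro _ ⟨x, -, rfl⟩; positivity⟩ (inv_pos.2 hm)
    (mem_closedBall_self ((by positivity : 0 ≤ m * ‖y‖).trans hmyr.le))
  simp only [hf0, zero_sub, norm_neg, dist_zero_right] at hz₀
  have hzy : ‖z‖ ≤ m * ‖y‖ := by
    rw [← inv_mul_le_iff₀ hm]; linarith [norm_nonneg (f z - y)]
  have hzr : z ∈ ball (0 : X) r := mem_ball_zero_iff.2 (hzy.trans_lt hmyr)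
  have hzR : z ∈ ball (0 : X) R := ball_subset_ball hrR.le hzr
  set v := L z (y - f z)
  have hdescent : ‖f z - y‖ ≤ m⁻¹ * ‖v‖ :=
    (hG z hzR).norm_sub_le_of_mem_nhds (hright z hzR _) (closedBall_mem_nhds_of_mem hzr) hzmin
  have hv : ‖v‖ ≤ m₀ * ‖f z - y‖ := by
    rw [norm_sub_rev]
    exact (L z).le_of_opNorm_le (hL z hzR) _
  have hfzy : ‖f z - y‖ = 0 := by
    have := (le_inv_mul_iff₀ hm).1 hdescent
    nlinarith [norm_nonneg (f z - y)]
  exact ⟨z, hzR, sub_eq_zero.1 (norm_eq_zero.1 hfzy), hzy⟩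
end

section
/- Let X, Y be Banach spaces, B the open ball of radius R > 0 in X, f : B → Y with f(0) = 0 Lipschitz continuous and Gâteaux-differentiable. Suppose there exist L : B → L(Y,X), a constant a < 1, and for each (x,w) ∈ B × Y a radius α(x,w) > 0 such that ‖x'−x‖ < α(x,w) implies x' ∈ B and ‖(Df(x')∘L(x) − I_Y)w‖ ≤ a‖w‖; and suppose sup{‖L(x)‖ : x ∈ B} < m. Let B' ⊂ Y be the open ball of radius R' = (1−a)R/m. Then there is a continuous map g : B' → B with f(g(y)) = y and ‖g(y)‖ ≤ (m/(1−a))‖y‖ for all y ∈ B'. -/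
/-!
The right inverse is the limit of a Newton-type iteration on continuous maps `u` from the ball
`‖y‖ < R / c` (with `c = m / (1 - a)`) into `X`, starting at `u = 0` and preserving the invariant
`‖u y‖ + c ‖y - f (u y)‖ ≤ c ‖y‖`. Near a point where `u` leaves the residual `w = y - f (u y)`,
the hypothesis on `Df ∘ L` at a nearby `x₀` and the mean value theorem show that moving by
`t • L x₀ w` multiplies the residual by at most `1 - t (1 - b)`, where `b < 1` and
`c (1 - b) = m₀`; so the distance travelled is at most `c` times the decrease of the residual,
which keeps the invariant and makes the iteration converge. The admissible steps form convex sets,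
so local steps are glued into a continuous one by a partition of unity. To see that the residual
of the limit `g` vanishes, steps are taken at least proportional to the largest radius on which
such an estimate is certified (`certRadius`): at a point where the residual of `g` were nonzero,
this radius stays bounded below along the iteration, so the residual would keep contracting.
-/

open Filter Metric Set Function Topology

section Gateaux

variable {X Y : Type*} [NormedAddCommGroup X] [NormedSpace ℝ X]
  [NormedAddCommGroup Y] [NormedSpace ℝ Y] {f : X → Y} {D : X →L[ℝ] Y}

theorem GateauxAt.hasDerivAt_comp_add_smul {p v : X} {s₀ : ℝ} (h : GateauxAt f D (p + s₀ • v)) :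
    HasDerivAt (fun s : ℝ => f (p + s • v)) (D v) s₀ := by
  rw [hasDerivAt_iff_tendsto_slope_zero]
  simpa only [add_smul, add_assoc] using h v

theorem GateauxAt.norm_apply_le {s : Set X} {K : NNReal} {x : X} (h : GateauxAt f D x)
    (hs : s ∈ 𝓝 x) (hf : LipschitzOnWith K f s) (v : X) : ‖D v‖ ≤ K * ‖v‖ := by
  have hline : LipschitzWith ‖v‖₊ (fun t : ℝ => x + t • v) :=
    LipschitzWith.of_dist_le_mul fun t t' => by
      simp [dist_eq_norm, ← sub_smul, norm_smul, mul_comm]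
  have hderiv : HasDerivAt (fun t : ℝ => f (x + t • v)) (D v) 0 :=
    GateauxAt.hasDerivAt_comp_add_smul (by simpa using h)
  have hpre : (fun t : ℝ => x + t • v) ⁻¹' s ∈ 𝓝 (0 : ℝ) :=
    hline.continuous.continuousAt.preimage_mem_nhds (by simpa using hs)
  simpa using hderiv.le_of_lipschitzOn hpre ((hf.comp hline.lipschitzOnWith (mapsTo_preimage _ _)))

theorem norm_sub_sub_le_of_gateauxAt {Df : X → X →L[ℝ] Y} {p v : X} {w : Y} {E : ℝ}
    (hG : ∀ s ∈ Icc (0 : ℝ) 1, GateauxAt f (Df (p + s • v)) (p + s • v))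
    (hE : ∀ s ∈ Icc (0 : ℝ) 1, ‖Df (p + s • v) v - w‖ ≤ E) :
    ‖f (p + v) - f p - w‖ ≤ E := by
  have hderiv : ∀ s ∈ Icc (0 : ℝ) 1, HasDerivWithinAt (fun s : ℝ => f (p + s • v) - s • w)
      (Df (p + s • v) v - w) (Icc 0 1) s := fun s hs =>
    ((hG s hs).hasDerivAt_comp_add_smul.sub
      (by simpa using (hasDerivAt_id s).smul_const w)).hasDerivWithinAt
  simpa [sub_right_comm] using
    norm_image_sub_le_of_norm_deriv_le_segment_01' hderiv fun s hs => hE s (Ico_subset_Icc_self hs)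

end Gateaux

theorem ContinuousLinearMap.norm_apply_apply_sub_le {X Y : Type*} [NormedAddCommGroup X]
    [NormedSpace ℝ X] [NormedAddCommGroup Y] [NormedSpace ℝ Y] (A : Y →L[ℝ] X) (B : X →L[ℝ] Y)
    (w w₀ : Y) : ‖B (A w) - w‖ ≤ ‖B (A w₀) - w₀‖ + (‖B‖ * ‖A‖ + 1) * ‖w - w₀‖ := by
  have hsplit : B (A w) - w = (B (A w₀) - w₀) + (B (A (w - w₀)) - (w - w₀)) := by
    simp only [map_sub]; abel
  calc ‖B (A w) - w‖ ≤ ‖B (A w₀) - w₀‖ + (‖B (A (w - w₀))‖ + ‖w - w₀‖) := by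
        rw [hsplit]; exact (norm_add_le _ _).trans (add_le_add_right (norm_sub_le _ _) _)
    _ ≤ ‖B (A w₀) - w₀‖ + (‖B‖ * (‖A‖ * ‖w - w₀‖) + ‖w - w₀‖) := by
        gcongr; exact B.le_opNorm_of_le (A.le_opNorm _)
    _ = _ := by ring

theorem convex_setOf_norm_sub_smul_le {E F : Type*} [AddCommGroup E] [Module ℝ E]
    [NormedAddCommGroup F] [NormedSpace ℝ F] (A : E →ₗ[ℝ] F) (w : F) (e : ℝ) :
    Convex ℝ {p : E × ℝ | ‖A p.1 - p.2 • w‖ ≤ p.2 * e} := by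
  intro p hp q hq s t hs ht hst
  have hsplit : A (s • p + t • q).1 - (s • p + t • q).2 • w =
      s • (A p.1 - p.2 • w) + t • (A q.1 - q.2 • w) := by
    simp only [Prod.fst_add, Prod.snd_add, Prod.smul_fst, Prod.smul_snd, map_add, map_smul,
      smul_sub, add_smul, smul_smul]
    abel
  simp only [mem_ofPred_eq] at hp hq ⊢
  rw [hsplit]
  calc _ ≤ ‖s • (A p.1 - p.2 • w)‖ + ‖t • (A q.1 - q.2 • w)‖ := norm_add_le _ _
    _ ≤ s * (p.2 * e) + t * (q.2 * e) := by
        rw [norm_smul_of_nonneg hs, norm_smul_of_nonneg ht]; gcongr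
    _ = _ := by simp only [Prod.snd_add, Prod.smul_snd, smul_eq_mul]; ring

theorem exists_tendsto_dist_le_of_dist_le_sub {α : Type*} [PseudoMetricSpace α] [CompleteSpace α]
    {u : ℕ → α} {e : ℕ → ℝ} (he : ∀ n, 0 ≤ e n)
    (hu : ∀ n, dist (u n) (u (n + 1)) ≤ e n - e (n + 1)) :
    ∃ a, Tendsto u atTop (𝓝 a) ∧ ∀ n, dist (u n) a ≤ e n := by
  have hnonneg : ∀ n, 0 ≤ e n - e (n + 1) := fun n => dist_nonneg.trans (hu n)
  have htail : ∀ n N, ∑ m ∈ Finset.range N, (e (n + m) - e (n + m + 1)) ≤ e n := fun n N => by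
    have := Finset.sum_range_sub' (fun m => e (n + m)) N
    simp only [add_zero, ← add_assoc] at this
    linarith [he (n + N)]
  have hsum : Summable fun n => e n - e (n + 1) :=
    summable_of_sum_range_le hnonneg (by simpa using htail 0)
  obtain ⟨a, ha⟩ := cauchySeq_tendsto_of_complete (cauchySeq_of_dist_le_of_summable _ hu hsum)
  refine ⟨a, ha, fun n => (dist_le_tsum_of_dist_le_of_tendsto _ hu hsum ha n).trans ?_⟩
  exact Real.tsum_le_of_sum_range_le (fun m => hnonneg (n + m)) (htail n)

theorem continuousAt_of_dist_le {T α : Type*} [TopologicalSpace T] [PseudoMetricSpace α]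
    {u : ℕ → T → α} {g : T → α} {e : ℕ → T → ℝ} {y : T} (hu : ∀ n, Continuous (u n))
    (he : ∀ n, Continuous (e n)) (hdist : ∀ n z, dist (u n z) (g z) ≤ e n z)
    (hy : Tendsto (fun n => e n y) atTop (𝓝 0)) : ContinuousAt g y := by
  rw [Metric.continuousAt_iff']
  intro ε hε
  obtain ⟨n, hn⟩ := (hy.eventually (gt_mem_nhds (by positivity : 0 < ε / 4))).exists
  have hnear : ∀ᶠ z in 𝓝 y, dist (u n z) (u n y) < ε / 4 ∧ e n z < ε / 2 :=
    ((hu n).continuousAt.eventually (ball_mem_nhds _ (by positivity))).and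
      ((he n).continuousAt.eventually (gt_mem_nhds (by linarith)))
  filter_upwards [hnear] with z ⟨hu_z, he_z⟩
  calc dist (g z) (g y) ≤ dist (g z) (u n z) + dist (u n z) (u n y) + dist (u n y) (g y) :=
        dist_triangle4 _ _ _ _
    _ < ε := by linarith [dist_comm (g z) (u n z) ▸ hdist n z, hdist n y]

/-- `c` stands for `m / (1 - a)`. -/
structure SurjectionData (X Y : Type*) [NormedAddCommGroup X] [NormedSpace ℝ X]
    [NormedAddCommGroup Y] [NormedSpace ℝ Y] where
  f : X → Y
  Df : X → X →L[ℝ] Y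
  L : X → Y →L[ℝ] X
  R : ℝ
  a : ℝ
  c : ℝ
  m₀ : ℝ
  K : NNReal
  R_pos : 0 < R
  a_nonneg : 0 ≤ a
  a_lt_one : a < 1
  m₀_pos : 0 < m₀
  m₀_lt : m₀ < (1 - a) * c
  f_zero : f 0 = 0
  lipschitzOnWith : LipschitzOnWith K f (ball 0 R)
  gateauxAt : ∀ x ∈ ball (0 : X) R, GateauxAt f (Df x) x
  approx : ∀ x ∈ ball (0 : X) R, ∀ w : Y, ∃ α > (0 : ℝ), ∀ x' : X, ‖x' - x‖ < α →
    x' ∈ ball (0 : X) R ∧ ‖Df x' (L x w) - w‖ ≤ a * ‖w‖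
  norm_L_le : ∀ x ∈ ball (0 : X) R, ‖L x‖ ≤ m₀

namespace SurjectionData

variable {X Y : Type*} [NormedAddCommGroup X] [NormedSpace ℝ X]
  [NormedAddCommGroup Y] [NormedSpace ℝ Y] (S : SurjectionData X Y)

noncomputable def R' : ℝ := S.R / S.c

/-- A full step (`t = 1`) multiplies the residual by at most `b`. -/
noncomputable def b : ℝ := 1 - S.m₀ / S.c

noncomputable def slack : ℝ := min (1 / 8) ((S.b - S.a) / (4 * (S.K * S.m₀ + 2)))

theorem c_pos : 0 < S.c :=
  pos_of_mul_pos_right (S.m₀_pos.trans S.m₀_lt) (by linarith [S.a_lt_one])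

theorem c_mul_one_sub_b : S.c * (1 - S.b) = S.m₀ := by
  rw [b, sub_sub_cancel, mul_div_cancel₀ _ S.c_pos.ne']

theorem a_lt_b : S.a < S.b := by
  have : S.m₀ / S.c < 1 - S.a := by rw [div_lt_iff₀ S.c_pos]; exact S.m₀_lt
  rw [b]; linarith

theorem b_lt_one : S.b < 1 := by
  have := div_pos S.m₀_pos S.c_pos
  rw [b]; linarith

theorem m₀_le_c : S.m₀ ≤ S.c := by
  have := S.c_mul_one_sub_b
  nlinarith [S.c_pos, S.a_nonneg, S.a_lt_b]

theorem slack_pos : 0 < S.slack := by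
  have := S.a_lt_b
  have := S.m₀_pos
  exact lt_min (by norm_num) (div_pos (by linarith) (by positivity))

theorem slack_le : S.slack ≤ 1 / 8 := min_le_left _ _

theorem a_add_slack_le : S.a + 4 * (S.K * S.m₀ + 2) * S.slack ≤ S.b := by
  have hC : 0 < 4 * ((S.K : ℝ) * S.m₀ + 2) := by have := S.m₀_pos; positivity
  have := (le_div_iff₀' hC).1 (min_le_right _ _ : S.slack ≤ _)
  rw [slack]; linarith

theorem norm_Df_le {x : X} (hx : x ∈ ball (0 : X) S.R) : ‖S.Df x‖ ≤ S.K :=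
  ContinuousLinearMap.opNorm_le_bound _ S.K.2 fun v =>
    (S.gateauxAt x hx).norm_apply_le (isOpen_ball.mem_nhds hx) S.lipschitzOnWith v

theorem R'_pos : 0 < S.R' := div_pos S.R_pos S.c_pos

def IsCert (x₀ : X) (w₀ : Y) (x : X) (w : Y) (δ r : ℝ) : Prop :=
  x₀ ∈ ball (0 : X) S.R ∧ ‖w - w₀‖ ≤ δ * ‖w₀‖ ∧
    ∀ x' ∈ ball x r, x' ∈ ball (0 : X) S.R ∧ ‖S.Df x' (S.L x₀ w₀) - w₀‖ ≤ S.a * ‖w₀‖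

theorem exists_isCert {x : X} (hx : x ∈ ball (0 : X) S.R) (w : Y) :
    ∃ r > 0, S.IsCert x w x w 0 r := by
  obtain ⟨α, hα, h⟩ := S.approx x hx w
  exact ⟨α, hα, hx, by simp, fun x' hx' => h x' (mem_ball_iff_norm.1 hx')⟩

variable {S}

theorem IsCert.mono {x₀ x x' : X} {w₀ w w' : Y} {δ δ' r r' : ℝ} (h : S.IsCert x₀ w₀ x w δ r)
    (hδ : δ ≤ 1) (hδδ' : δ ≤ δ') (hx : ‖x' - x‖ + r' ≤ r) (hw : 2 * ‖w' - w‖ ≤ (δ' - δ) * ‖w‖) :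
    S.IsCert x₀ w₀ x' w' δ' r' := by
  obtain ⟨hx₀, hww₀, hball⟩ := h
  refine ⟨hx₀, ?_, fun p hp => hball p (ball_subset_ball' (by rwa [dist_eq_norm, add_comm]) hp)⟩
  have hw₀ : ‖w‖ ≤ 2 * ‖w₀‖ := by
    have := norm_le_norm_add_norm_sub' w w₀
    nlinarith [norm_nonneg w₀]
  calc ‖w' - w₀‖ ≤ ‖w' - w‖ + ‖w - w₀‖ := norm_sub_le_norm_sub_add_norm_sub _ _ _
    _ ≤ δ' * ‖w₀‖ := by nlinarith [norm_nonneg w₀]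

theorem IsCert.norm_apply_sub_le {x₀ x p : X} {w₀ w : Y} {δ r : ℝ} (h : S.IsCert x₀ w₀ x w δ r)
    (hδ : δ ≤ 2 * S.slack) (hp : p ∈ ball x r) : ‖S.Df p (S.L x₀ w) - w‖ ≤ S.b * ‖w‖ := by
  obtain ⟨hx₀, hww₀, hball⟩ := h
  obtain ⟨hpB, hp₀⟩ := hball p hp
  have hC : ‖S.Df p‖ * ‖S.L x₀‖ + 1 ≤ S.K * S.m₀ + 1 := by
    gcongr
    · exact S.norm_Df_le hpB
    · exact S.norm_L_le x₀ hx₀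
  have hδ' : δ ≤ 1 / 4 := by linarith [S.slack_le]
  have hw₀ : ‖w₀‖ ≤ 2 * ‖w‖ := by
    have := norm_le_norm_add_norm_sub' w₀ w
    rw [norm_sub_rev] at this
    nlinarith [norm_nonneg w₀]
  have hww : ‖w - w₀‖ ≤ 2 * S.slack * (2 * ‖w‖) :=
    hww₀.trans (mul_le_mul hδ hw₀ (norm_nonneg _) (by linarith [S.slack_pos]))
  have hd := norm_nonneg (w - w₀)
  have ha := S.a_nonneg
  have hm := S.m₀_pos
  calc ‖S.Df p (S.L x₀ w) - w‖
      ≤ S.a * ‖w₀‖ + (S.K * S.m₀ + 1) * ‖w - w₀‖ :=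
        (ContinuousLinearMap.norm_apply_apply_sub_le _ _ w w₀).trans (by gcongr)
    _ ≤ S.a * ‖w‖ + (S.K * S.m₀ + 2) * ‖w - w₀‖ := by
        have := norm_le_norm_add_norm_sub' w₀ w
        rw [norm_sub_rev] at this
        nlinarith [S.a_lt_one]
    _ ≤ S.a * ‖w‖ + (S.K * S.m₀ + 2) * (2 * S.slack * (2 * ‖w‖)) := by
        gcongr
    _ ≤ S.b * ‖w‖ := by nlinarith [S.a_add_slack_le, norm_nonneg w]

variable (S)

/-- The slack allowed at radius `r` grows as `r` shrinks, so that a certificate moved to a nearby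
pair at a smaller radius is still eligible (`eligible_of_near`, `certRadius_le_of_near`). -/
def Eligible (x : X) (w : Y) (r : ℝ) : Prop :=
  0 < r ∧ r ≤ 1 ∧ ∃ x₀ w₀, S.IsCert x₀ w₀ x w (S.slack * (1 - r / 2)) r

noncomputable def certRadius (x : X) (w : Y) : ℝ := sSup {r | S.Eligible x w r}

variable {S}

theorem Eligible.le_certRadius {x : X} {w : Y} {r : ℝ} (h : S.Eligible x w r) :
    r ≤ S.certRadius x w :=
  le_csSup ⟨1, fun _ hr => hr.2.1⟩ h

theorem certRadius_nonneg (x : X) (w : Y) : 0 ≤ S.certRadius x w :=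
  Real.sSup_nonneg fun _ hr => hr.1.le

theorem exists_eligible {x : X} (hx : x ∈ ball (0 : X) S.R) (w : Y) : ∃ r, S.Eligible x w r := by
  obtain ⟨α, hα, h⟩ := S.exists_isCert hx w
  have hδ : 0 ≤ S.slack * (1 - min 1 α / 2) :=
    mul_nonneg S.slack_pos.le (by linarith [min_le_left 1 α])
  exact ⟨min 1 α, lt_min one_pos hα, min_le_left _ _, x, w,
    h.mono (by norm_num) hδ (by simp) (by simp; positivity)⟩

theorem exists_eligible_certRadius_lt {x : X} (hx : x ∈ ball (0 : X) S.R) (w : Y) :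
    ∃ r, S.Eligible x w r ∧ S.certRadius x w < 2 * r := by
  obtain ⟨r, hr⟩ := exists_eligible hx w
  have hpos : 0 < S.certRadius x w := hr.1.trans_le hr.le_certRadius
  obtain ⟨r', hr', hlt⟩ := exists_lt_of_lt_csSup ⟨r, hr⟩ (half_lt_self hpos)
  exact ⟨r', hr', by unfold certRadius; linarith⟩

section Near

variable {x₀ x₁ x : X} {w₀ w₁ w : Y} {r₁ : ℝ}

theorem norm_le_two_mul_of_near (hr₁ : r₁ ≤ 1) (hw : ‖w - w₁‖ < S.slack * r₁ / 64 * ‖w₁‖) :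
    ‖w₁‖ ≤ 2 * ‖w‖ := by
  have : S.slack * r₁ / 64 ≤ 1 / 2 := by nlinarith [S.slack_le, S.slack_pos]
  have := norm_le_norm_add_norm_sub' w₁ w
  rw [norm_sub_rev] at this
  nlinarith [norm_nonneg w₁]

theorem eligible_of_near (hr₁ : 0 < r₁) (hr₁' : r₁ ≤ 1)
    (hcert : S.IsCert x₀ w₀ x₁ w₁ (S.slack * (1 - r₁ / 2)) r₁)
    (hx : ‖x - x₁‖ < r₁ / 8) (hw : ‖w - w₁‖ < S.slack * r₁ / 64 * ‖w₁‖) :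
    S.Eligible x w (3 * r₁ / 4) := by
  have hs := S.slack_pos
  refine ⟨by positivity, by linarith, x₀, w₀, hcert.mono (by nlinarith [S.slack_le])
    (by nlinarith) (by linarith) ?_⟩
  nlinarith [mul_nonneg (mul_nonneg hs.le hr₁.le) (norm_nonneg w₁)]

theorem certRadius_le_of_near (hr₁ : 0 < r₁) (hr₁' : r₁ ≤ 1) (hmax : S.certRadius x₁ w₁ < 2 * r₁)
    (hx : ‖x - x₁‖ < r₁ / 8) (hw : ‖w - w₁‖ < S.slack * r₁ / 64 * ‖w₁‖) :
    S.certRadius x w ≤ 8 * r₁ / 3 := by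
  have hs := S.slack_pos
  have hw₁ := norm_le_two_mul_of_near hr₁' hw
  apply Real.sSup_le _ (by positivity)
  rintro r ⟨hr, hr', x₀, w₀, hcert⟩
  by_contra! hlt
  have hmoved : S.Eligible x₁ w₁ (3 * r / 4) := by
    refine ⟨by positivity, by linarith, x₀, w₀, hcert.mono (by nlinarith [S.slack_le])
      (by nlinarith) (by rw [norm_sub_rev]; linarith) ?_⟩
    have h₁ := mul_le_mul_of_nonneg_left hw₁ (mul_nonneg hs.le hr₁.le)
    have h₂ := mul_le_mul_of_nonneg_left hlt.le (mul_nonneg hs.le (norm_nonneg w))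
    rw [norm_sub_rev]
    nlinarith
  linarith [hmoved.le_certRadius]

end Near

variable (S)

noncomputable def minStep (x : X) (w : Y) : ℝ := min 1 (S.certRadius x w / (64 * S.m₀ * S.R'))

/-- A step `(v, t)` from `x` moves to `x + v` and reduces the residual `w` by the fraction
`t * (1 - b)` (`norm_sub_apply_add_le`). The lower bound `minStep` on `t` is imposed only where
the residual is at least `ε`: near a zero of the residual no certificate has a uniform radius. -/
def stepSet (ε : ℝ) (x : X) (w : Y) : Set (X × ℝ) :=
  {p | 0 ≤ p.2 ∧ p.2 ≤ 1 ∧ ‖p.1‖ ≤ p.2 * (S.m₀ * ‖w‖) ∧ ‖p.1‖ ≤ S.certRadius x w / 8 ∧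
    (∀ x' ∈ closedBall x (S.certRadius x w / 8), ‖S.Df x' p.1 - p.2 • w‖ ≤ p.2 * (S.b * ‖w‖)) ∧
    (ε ≤ ‖w‖ → S.minStep x w ≤ p.2)}

theorem convex_stepSet (ε : ℝ) (x : X) (w : Y) : Convex ℝ (S.stepSet ε x w) := by
  intro p ⟨hp0, hp1, hpm, hpr, hpD, hpε⟩ q ⟨hq0, hq1, hqm, hqr, hqD, hqε⟩ s t hs ht hst
  have hm : s • p + t • q ∈ {p : X × ℝ | ‖p.1‖ ≤ p.2 * (S.m₀ * ‖w‖)} := by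
    have := convex_setOf_norm_sub_smul_le LinearMap.id (0 : X) (S.m₀ * ‖w‖)
    simp only [LinearMap.id_apply, smul_zero, sub_zero] at this
    exact this hpm hqm hs ht hst
  have hr : s • p.1 + t • q.1 ∈ closedBall (0 : X) (S.certRadius x w / 8) :=
    convex_closedBall _ _ (mem_closedBall_zero_iff.2 hpr) (mem_closedBall_zero_iff.2 hqr) hs ht hst
  have hD : ∀ x' ∈ closedBall x (S.certRadius x w / 8),
      s • p + t • q ∈ {p : X × ℝ | ‖S.Df x' p.1 - p.2 • w‖ ≤ p.2 * (S.b * ‖w‖)} := fun x' hx' =>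
    convex_setOf_norm_sub_smul_le (S.Df x').toLinearMap w _ (hpD x' hx') (hqD x' hx') hs ht hst
  simp only [mem_closedBall_zero_iff, mem_ofPred_eq] at hm hr hD
  simp only [stepSet, mem_ofPred_eq, Prod.fst_add, Prod.snd_add, Prod.smul_fst, Prod.smul_snd,
    smul_eq_mul] at hm hD ⊢
  refine ⟨by positivity, by nlinarith, hm, hr, hD, fun hε => ?_⟩
  nlinarith [hpε hε, hqε hε]

def Admissible (y : Y) (x : X) : Prop := ‖x‖ + S.c * ‖y - S.f x‖ ≤ S.c * ‖y‖

theorem admissible_zero (y : Y) : S.Admissible y 0 := by simp [Admissible, S.f_zero]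

variable {S} {y : Y} {x : X} {ε : ℝ} {p : X × ℝ}

theorem Admissible.norm_le (h : S.Admissible y x) : ‖x‖ ≤ S.c * ‖y‖ := by
  have := mul_nonneg S.c_pos.le (norm_nonneg (y - S.f x))
  rw [Admissible] at h; linarith

theorem Admissible.norm_sub_le (h : S.Admissible y x) : ‖y - S.f x‖ ≤ ‖y‖ := by
  rw [Admissible] at h
  exact le_of_mul_le_mul_left (by linarith [norm_nonneg x]) S.c_pos

theorem c_mul_lt_R (hy : ‖y‖ < S.R') : S.c * ‖y‖ < S.R := by
  calc S.c * ‖y‖ < S.c * S.R' := mul_lt_mul_of_pos_left hy S.c_pos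
    _ = S.R := mul_div_cancel₀ _ S.c_pos.ne'

theorem Admissible.mem_ball (h : S.Admissible y x) (hy : ‖y‖ < S.R') : x ∈ ball (0 : X) S.R :=
  mem_ball_zero_iff.2 (h.norm_le.trans_lt (c_mul_lt_R hy))

theorem norm_sub_apply_add_le (hy : ‖y‖ < S.R') (hx : S.Admissible y x)
    (hp : p ∈ S.stepSet ε x (y - S.f x)) :
    ‖y - S.f (x + p.1)‖ ≤ (1 - p.2 * (1 - S.b)) * ‖y - S.f x‖ := by
  obtain ⟨ht0, ht1, hvm, hvr, hD, -⟩ := hp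
  have hsv : ∀ s ∈ Icc (0 : ℝ) 1, ‖s • p.1‖ ≤ ‖p.1‖ := fun s hs => by
    rw [norm_smul_of_nonneg hs.1]; exact mul_le_of_le_one_left (norm_nonneg _) hs.2
  have hseg : ∀ s ∈ Icc (0 : ℝ) 1, x + s • p.1 ∈ ball (0 : X) S.R := fun s hs => by
    have hm : p.2 * (S.m₀ * ‖y - S.f x‖) ≤ S.c * ‖y - S.f x‖ := by
      have := mul_nonneg S.m₀_pos.le (norm_nonneg (y - S.f x))
      nlinarith [S.m₀_le_c, norm_nonneg (y - S.f x)]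
    rw [mem_ball_zero_iff]
    calc ‖x + s • p.1‖ ≤ ‖x‖ + ‖p.1‖ := (norm_add_le _ _).trans (by gcongr; exact hsv s hs)
      _ ≤ S.c * ‖y‖ := by unfold Admissible at hx; linarith
      _ < S.R := c_mul_lt_R hy
  have hmvt : ‖S.f (x + p.1) - S.f x - p.2 • (y - S.f x)‖ ≤ p.2 * (S.b * ‖y - S.f x‖) :=
    norm_sub_sub_le_of_gateauxAt (fun s hs => S.gateauxAt _ (hseg s hs)) fun s hs =>
      hD _ (by simpa [dist_eq_norm] using (hsv s hs).trans hvr)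
  have hsplit : y - S.f (x + p.1) =
      (1 - p.2) • (y - S.f x) - (S.f (x + p.1) - S.f x - p.2 • (y - S.f x)) := by
    rw [sub_smul, one_smul]; abel
  rw [hsplit]
  calc _ ≤ ‖(1 - p.2) • (y - S.f x)‖ + ‖S.f (x + p.1) - S.f x - p.2 • (y - S.f x)‖ :=
        norm_sub_le _ _
    _ ≤ (1 - p.2) * ‖y - S.f x‖ + p.2 * (S.b * ‖y - S.f x‖) := by
        rw [norm_smul_of_nonneg (by linarith)]; gcongr
    _ = _ := by ring

theorem norm_le_of_mem_stepSet (hy : ‖y‖ < S.R') (hx : S.Admissible y x)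
    (hp : p ∈ S.stepSet ε x (y - S.f x)) :
    ‖p.1‖ ≤ S.c * (‖y - S.f x‖ - ‖y - S.f (x + p.1)‖) := by
  have hdec := norm_sub_apply_add_le hy hx hp
  calc ‖p.1‖ ≤ p.2 * (S.m₀ * ‖y - S.f x‖) := hp.2.2.1
    _ = S.c * (p.2 * (1 - S.b) * ‖y - S.f x‖) := by rw [← S.c_mul_one_sub_b]; ring
    _ ≤ S.c * (‖y - S.f x‖ - ‖y - S.f (x + p.1)‖) := by
        gcongr ?_ * ?_
        · exact S.c_pos.le
        · linarith

theorem Admissible.add (hy : ‖y‖ < S.R') (hx : S.Admissible y x)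
    (hp : p ∈ S.stepSet ε x (y - S.f x)) : S.Admissible y (x + p.1) := by
  have := norm_le_of_mem_stepSet hy hx hp
  unfold Admissible at hx ⊢
  linarith [norm_add_le x p.1]

theorem zero_mem_stepSet {w : Y} (hw : ‖w‖ < ε) : (0 : X × ℝ) ∈ S.stepSet ε x w :=
  ⟨le_rfl, zero_le_one, by simp, by simpa using div_nonneg (certRadius_nonneg x w) (by norm_num),
    by simp, fun hε => absurd hw hε.not_gt⟩

theorem mem_stepSet_of_near {x₀ x₁ : X} {w₀ w₁ w : Y} {r₁ : ℝ} (hr₁ : 0 < r₁) (hr₁' : r₁ ≤ 1)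
    (hcert : S.IsCert x₀ w₀ x₁ w₁ (S.slack * (1 - r₁ / 2)) r₁)
    (hmax : S.certRadius x₁ w₁ < 2 * r₁) (hx : ‖x - x₁‖ < r₁ / 8)
    (hw : ‖w - w₁‖ < S.slack * r₁ / 64 * ‖w₁‖) (hwR : ‖w‖ < S.R') :
    (min 1 (r₁ / (16 * S.m₀ * S.R')) • S.L x₀ w, min 1 (r₁ / (16 * S.m₀ * S.R'))) ∈
      S.stepSet ε x w := by
  set τ := min 1 (r₁ / (16 * S.m₀ * S.R'))
  have hm := S.m₀_pos
  have hR := S.R'_pos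
  have hs := S.slack_pos
  have hlo := (eligible_of_near hr₁ hr₁' hcert hx hw).le_certRadius
  have hhi := certRadius_le_of_near hr₁ hr₁' hmax hx hw
  have hτ0 : 0 ≤ τ := le_min zero_le_one (by positivity)
  have hv : ‖τ • S.L x₀ w‖ ≤ τ * (S.m₀ * ‖w‖) := by
    rw [norm_smul_of_nonneg hτ0]
    exact mul_le_mul_of_nonneg_left ((S.L x₀).le_of_opNorm_le (S.norm_L_le x₀ hcert.1) w) hτ0
  have hv' : τ * (S.m₀ * ‖w‖) ≤ r₁ / 16 := by
    calc τ * (S.m₀ * ‖w‖) ≤ r₁ / (16 * S.m₀ * S.R') * (S.m₀ * S.R') := by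
          gcongr; exact min_le_right _ _
      _ = r₁ / 16 := by field_simp
  have hcert' : S.IsCert x₀ w₀ x₁ w (2 * S.slack) r₁ :=
    hcert.mono (by nlinarith [S.slack_le]) (by nlinarith) (by simp)
      (by nlinarith [mul_nonneg (mul_nonneg hs.le hr₁.le) (norm_nonneg w₁)])
  refine ⟨hτ0, min_le_left _ _, hv, by linarith, fun x' hx' => ?_, fun _ => ?_⟩
  · have hx'₁ : x' ∈ ball x₁ r₁ := by
      rw [mem_closedBall, dist_eq_norm] at hx'
      rw [mem_ball, dist_eq_norm]
      linarith [norm_sub_le_norm_sub_add_norm_sub x' x x₁]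
    rw [map_smul, ← smul_sub, norm_smul_of_nonneg hτ0]
    exact mul_le_mul_of_nonneg_left (hcert'.norm_apply_sub_le le_rfl hx'₁) hτ0
  · refine min_le_min_left _ ?_
    rw [div_le_div_iff₀ (by positivity) (by positivity)]
    nlinarith [mul_pos hm hR]

theorem eventually_eligible (hx : x ∈ ball (0 : X) S.R) {w : Y} (hw : w ≠ 0) :
    ∃ r > 0, ∀ᶠ p in 𝓝 (x, w), S.Eligible p.1 p.2 r := by
  obtain ⟨α, hα, hcert⟩ := S.exists_isCert hx w
  have hr : 0 < min 1 (α / 2) := lt_min one_pos (by positivity)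
  have hr' : min 1 (α / 2) ≤ 1 := min_le_left _ _
  have hs := S.slack_pos
  have hwpos := norm_pos_iff.2 hw
  refine ⟨min 1 (α / 2), hr, ?_⟩
  filter_upwards [prod_mem_nhds (ball_mem_nhds x (half_pos hα))
    (ball_mem_nhds w (by positivity : 0 < S.slack / 4 * ‖w‖))] with p ⟨hpx, hpw⟩
  rw [mem_ball, dist_eq_norm] at hpx hpw
  refine ⟨hr, hr', x, w, hcert.mono (by norm_num) (by nlinarith) ?_ ?_⟩
  · linarith [min_le_right 1 (α / 2)]
  · nlinarith [mul_le_mul_of_nonneg_left hr' (mul_nonneg hs.le hwpos.le)]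

theorem tendsto_sub_apply {u : ℕ → X} (hu : Tendsto u atTop (𝓝 x)) (hx : x ∈ ball (0 : X) S.R) :
    Tendsto (fun n => y - S.f (u n)) atTop (𝓝 (y - S.f x)) :=
  tendsto_const_nhds.sub ((S.lipschitzOnWith.continuousOn.continuousAt
    (isOpen_ball.mem_nhds hx)).tendsto.comp hu)

theorem admissible_of_tendsto (hy : ‖y‖ < S.R') {u : ℕ → X} (hu : Tendsto u atTop (𝓝 x))
    (hadm : ∀ n, S.Admissible y (u n)) : S.Admissible y x := by
  have hx : x ∈ ball (0 : X) S.R := mem_ball_zero_iff.2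
    ((le_of_tendsto' hu.norm fun n => (hadm n).norm_le).trans_lt (c_mul_lt_R hy))
  exact le_of_tendsto' (hu.norm.add ((tendsto_sub_apply hu hx).norm.const_mul S.c)) hadm

theorem apply_eq_of_tendsto {u : ℕ → X} (hu : Tendsto u atTop (𝓝 x))
    (hx : x ∈ ball (0 : X) S.R) (hanti : Antitone fun n => ‖y - S.f (u n)‖)
    (hdec : ∀ n, (1 / 2 : ℝ) ^ n ≤ ‖y - S.f (u n)‖ → ‖y - S.f (u (n + 1))‖ ≤
      (1 - S.minStep (u n) (y - S.f (u n)) * (1 - S.b)) * ‖y - S.f (u n)‖) :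
    S.f x = y := by
  have hres := tendsto_sub_apply (y := y) hu hx
  have hd := hres.norm
  by_contra hne
  have hβ : 0 < ‖y - S.f x‖ := norm_pos_iff.2 (sub_ne_zero.2 (Ne.symm hne))
  obtain ⟨r, hr, hev⟩ := eventually_eligible hx (sub_ne_zero.2 (Ne.symm hne))
  set γ := min 1 (r / (64 * S.m₀ * S.R'))
  have hden : 0 < 64 * S.m₀ * S.R' := by have := S.m₀_pos; have := S.R'_pos; positivity
  have hγ : 0 < γ := lt_min one_pos (div_pos hr hden)
  have hstep : ∀ᶠ n in atTop, ‖y - S.f (u (n + 1))‖ ≤ (1 - γ * (1 - S.b)) * ‖y - S.f (u n)‖ := by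
    filter_upwards [(hu.prodMk_nhds hres).eventually hev,
      (tendsto_pow_atTop_nhds_zero_of_lt_one (r := (1 / 2 : ℝ)) (by norm_num)
        (by norm_num)).eventually (ge_mem_nhds hβ)] with n helig hhalf
    have hγn : γ ≤ S.minStep (u n) (y - S.f (u n)) := min_le_min_left _
      (div_le_div_of_nonneg_right helig.le_certRadius hden.le)
    refine (hdec n (hhalf.trans (hanti.le_of_tendsto hd n))).trans ?_
    gcongr
    linarith [S.b_lt_one]
  have hle := le_of_tendsto_of_tendsto (hd.comp (tendsto_add_atTop_nat 1)) (hd.const_mul _) hstep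
  nlinarith [mul_pos (mul_pos hγ (sub_pos.2 S.b_lt_one)) hβ]

section Continuous

variable {u : ball (0 : Y) S.R' → X}

theorem continuous_residual (hu : Continuous u)
    (hadm : ∀ y : ball (0 : Y) S.R', S.Admissible y (u y)) :
    Continuous fun y : ball (0 : Y) S.R' => (y : Y) - S.f (u y) :=
  continuous_subtype_val.sub <| S.lipschitzOnWith.continuousOn.comp_continuous hu fun y =>
    (hadm y).mem_ball (mem_ball_zero_iff.1 y.2)

theorem exists_local_step (hu : Continuous u)
    (hadm : ∀ y : ball (0 : Y) S.R', S.Admissible y (u y)) (hε : 0 < ε) (y₀ : ball (0 : Y) S.R') :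
    ∃ U ∈ 𝓝 y₀, ∃ g : ball (0 : Y) S.R' → X × ℝ, ContinuousOn g U ∧
      ∀ y ∈ U, g y ∈ S.stepSet ε (u y) ((y : Y) - S.f (u y)) := by
  have hres := continuous_residual hu hadm
  set w : ball (0 : Y) S.R' → Y := fun y => (y : Y) - S.f (u y)
  by_cases hsmall : ‖w y₀‖ < ε
  · exact ⟨{y | ‖w y‖ < ε}, (isOpen_lt hres.norm continuous_const).mem_nhds hsmall, 0,
      continuousOn_const, fun y hy => zero_mem_stepSet hy⟩
  have hw₀ : 0 < ‖w y₀‖ := hε.trans_le (not_lt.1 hsmall)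
  obtain ⟨r₁, ⟨hr₁, hr₁', x₀, w₀, hcert⟩, hmax⟩ :=
    exists_eligible_certRadius_lt ((hadm y₀).mem_ball (mem_ball_zero_iff.1 y₀.2)) (w y₀)
  set τ := min 1 (r₁ / (16 * S.m₀ * S.R'))
  have hU : IsOpen {y | ‖u y - u y₀‖ < r₁ / 8 ∧ ‖w y - w y₀‖ < S.slack * r₁ / 64 * ‖w y₀‖} :=
    (isOpen_lt (hu.sub continuous_const).norm continuous_const).inter
      (isOpen_lt (hres.sub continuous_const).norm continuous_const)
  have hs := S.slack_pos
  refine ⟨_, hU.mem_nhds ⟨by simpa using hr₁, by simpa using by positivity⟩,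
    fun y => (τ • S.L x₀ (w y), τ), ((continuous_const.smul ((S.L x₀).continuous.comp hres)).prodMk
      continuous_const).continuousOn, fun y ⟨hx, hw⟩ => ?_⟩
  exact mem_stepSet_of_near hr₁ hr₁' hcert hmax hx hw
    ((hadm y).norm_sub_le.trans_lt (mem_ball_zero_iff.1 y.2))

theorem exists_step (hu : Continuous u) (hadm : ∀ y : ball (0 : Y) S.R', S.Admissible y (u y))
    (hε : 0 < ε) : ∃ u' : ball (0 : Y) S.R' → X, Continuous u' ∧ ∀ y : ball (0 : Y) S.R',
      S.Admissible y (u' y) ∧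
      ‖u' y - u y‖ ≤ S.c * (‖(y : Y) - S.f (u y)‖ - ‖(y : Y) - S.f (u' y)‖) ∧
      (ε ≤ ‖(y : Y) - S.f (u y)‖ → ‖(y : Y) - S.f (u' y)‖ ≤
        (1 - S.minStep (u y) ((y : Y) - S.f (u y)) * (1 - S.b)) * ‖(y : Y) - S.f (u y)‖) := by
  obtain ⟨g, hg⟩ := exists_continuous_forall_mem_convex_of_local
    (fun y => S.convex_stepSet ε (u y) _) (exists_local_step hu hadm hε)
  refine ⟨fun y => u y + (g y).1, hu.add (continuous_fst.comp g.continuous), fun y => ?_⟩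
  have hy : ‖(y : Y)‖ < S.R' := mem_ball_zero_iff.1 y.2
  refine ⟨(hadm y).add hy (hg y), by simpa using norm_le_of_mem_stepSet hy (hadm y) (hg y),
    fun hε => (norm_sub_apply_add_le hy (hadm y) (hg y)).trans ?_⟩
  gcongr
  · linarith [S.b_lt_one]
  · exact (hg y).2.2.2.2.2 hε

end Continuous

theorem exists_seq : ∃ u : ℕ → ball (0 : Y) S.R' → X, (∀ n, Continuous (u n)) ∧
    ∀ n, ∀ y : ball (0 : Y) S.R', S.Admissible y (u n y) ∧
      ‖u (n + 1) y - u n y‖ ≤ S.c * (‖(y : Y) - S.f (u n y)‖ - ‖(y : Y) - S.f (u (n + 1) y)‖) ∧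
      ((1 / 2 : ℝ) ^ n ≤ ‖(y : Y) - S.f (u n y)‖ → ‖(y : Y) - S.f (u (n + 1) y)‖ ≤
        (1 - S.minStep (u n y) ((y : Y) - S.f (u n y)) * (1 - S.b)) * ‖(y : Y) - S.f (u n y)‖) := by
  let Maps :=
    {u : ball (0 : Y) S.R' → X // Continuous u ∧ ∀ y : ball (0 : Y) S.R', S.Admissible y (u y)}
  choose next hnext using fun (n : ℕ) (u : Maps) =>
    exists_step u.2.1 u.2.2 (by positivity : 0 < (1 / 2 : ℝ) ^ n)
  let seq : ℕ → Maps := fun n => Nat.rec ⟨0, continuous_const, fun y => S.admissible_zero y⟩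
    (fun k u => ⟨next k u, (hnext k u).1, fun y => ((hnext k u).2 y).1⟩) n
  exact ⟨fun n => (seq n).1, fun n => (seq n).2.1, fun n y =>
    ⟨(seq n).2.2 y, ((hnext n (seq n)).2 y).2⟩⟩

theorem exists_rightInverse [CompleteSpace X] : ∃ g : ball (0 : Y) S.R' → X, Continuous g ∧
    ∀ y : ball (0 : Y) S.R', S.Admissible y (g y) ∧ S.f (g y) = y := by
  obtain ⟨u, hcont, hu⟩ := S.exists_seq
  have hlim (y : ball (0 : Y) S.R') : ∃ g, Tendsto (u · y) atTop (𝓝 g) ∧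
      ∀ n, dist (u n y) g ≤ S.c * ‖(y : Y) - S.f (u n y)‖ :=
    exists_tendsto_dist_le_of_dist_le_sub (fun n => mul_nonneg S.c_pos.le (norm_nonneg _))
      fun n => by rw [dist_comm, dist_eq_norm, ← mul_sub]; exact (hu n y).2.1
  choose g hg hdist using hlim
  have hy (y : ball (0 : Y) S.R') : ‖(y : Y)‖ < S.R' := mem_ball_zero_iff.1 y.2
  have hadm (y : ball (0 : Y) S.R') : S.Admissible y (g y) :=
    admissible_of_tendsto (hy y) (hg y) fun n => (hu n y).1
  have hanti (y : ball (0 : Y) S.R') : Antitone fun n => ‖(y : Y) - S.f (u n y)‖ :=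
    antitone_nat_of_succ_le fun n => by
      have := (norm_nonneg _).trans (hu n y).2.1
      nlinarith [S.c_pos]
  have hfg (y : ball (0 : Y) S.R') : S.f (g y) = y :=
    apply_eq_of_tendsto (hg y) ((hadm y).mem_ball (hy y)) (hanti y) fun n => (hu n y).2.2
  refine ⟨g, continuous_iff_continuousAt.2 fun y => ?_, fun y => ⟨hadm y, hfg y⟩⟩
  refine continuousAt_of_dist_le
    (e := fun n (z : ball (0 : Y) S.R') => S.c * ‖(z : Y) - S.f (u n z)‖) hcont
    (fun n => continuous_const.mul (continuous_residual (hcont n) fun y => (hu n y).1).norm)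
    (fun n z => hdist z n) ?_
  simpa [hfg y] using
    ((tendsto_sub_apply (y := (y : Y)) (hg y) ((hadm y).mem_ball (hy y))).norm.const_mul S.c)

theorem exists_continuousOn_rightInverse [CompleteSpace X] :
    ∃ g : Y → X, ContinuousOn g (ball 0 S.R') ∧
    ∀ y ∈ ball (0 : Y) S.R', g y ∈ ball (0 : X) S.R ∧ S.f (g y) = y ∧ ‖g y‖ ≤ S.c * ‖y‖ := by
  classical
  obtain ⟨g, hg, hgy⟩ := S.exists_rightInverse
  refine ⟨fun y => if h : y ∈ ball (0 : Y) S.R' then g ⟨y, h⟩ else 0,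
    continuousOn_iff_continuous_domRestrict.2
      (by convert hg using 1; funext y; simp [mem_ball_zero_iff.1 y.2]),
    fun y hy => ?_⟩
  simp only [dif_pos hy]
  exact ⟨(hgy _).1.mem_ball (mem_ball_zero_iff.1 hy), (hgy _).2, (hgy _).1.norm_le⟩

end SurjectionData

theorem stmt_1_general {X Y : Type*} [NormedAddCommGroup X] [NormedSpace ℝ X] [CompleteSpace X]
    [NormedAddCommGroup Y] [NormedSpace ℝ Y]
    (R m a : ℝ) (hR : 0 < R) (ha : a < 1)
    (f : X → Y) (hf0 : f 0 = 0)
    (hlip : ∃ K : NNReal, LipschitzOnWith K f (ball (0 : X) R))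
    (Df : X → X →L[ℝ] Y)
    (hG : ∀ x ∈ ball (0 : X) R, GateauxAt f (Df x) x)
    (L : X → Y →L[ℝ] X)
    (happrox : ∀ x ∈ ball (0 : X) R, ∀ w : Y, ∃ α > (0 : ℝ), ∀ x' : X, ‖x' - x‖ < α →
      x' ∈ ball (0 : X) R ∧ ‖Df x' (L x w) - w‖ ≤ a * ‖w‖)
    (hsup : ∃ m₀ < m, ∀ x ∈ ball (0 : X) R, ‖L x‖ ≤ m₀) :
    ∃ g : Y → X, ContinuousOn g (ball (0 : Y) ((1 - a) * R / m)) ∧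
      ∀ y ∈ ball (0 : Y) ((1 - a) * R / m),
        g y ∈ ball (0 : X) R ∧ f (g y) = y ∧ ‖g y‖ ≤ (m / (1 - a)) * ‖y‖ := by
  rcases subsingleton_or_nontrivial Y with hY | hY
  · exact ⟨0, continuousOn_const, fun y _ =>
      ⟨mem_ball_self hR, by simp [hf0, Subsingleton.elim (0 : Y) y],
        by simp [Subsingleton.elim y 0]⟩⟩
  obtain ⟨K, hK⟩ := hlip
  obtain ⟨m₀, hm₀, hL⟩ := hsup
  obtain ⟨w, hw⟩ := exists_ne (0 : Y)
  obtain ⟨α, hα, happrox₀⟩ := happrox 0 (mem_ball_self hR) w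
  have ha0 : 0 ≤ a := by
    have := (happrox₀ 0 (by simpa using hα)).2
    nlinarith [norm_pos_iff.2 hw, norm_nonneg (Df 0 (L 0 w) - w)]
  have hm : 0 < m := ((norm_nonneg _).trans (hL 0 (mem_ball_self hR))).trans_lt hm₀
  let S : SurjectionData X Y :=
    { f, Df, L, R, a, c := m / (1 - a), m₀ := max m₀ (m / 2), K, R_pos := hR, a_nonneg := ha0,
      a_lt_one := ha, m₀_pos := lt_max_of_lt_right (half_pos hm)
      m₀_lt := by rw [mul_div_cancel₀ _ (sub_ne_zero.2 ha.ne')]; exact max_lt hm₀ (half_lt_self hm)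
      f_zero := hf0, lipschitzOnWith := hK, gateauxAt := hG, approx := happrox
      norm_L_le := fun x hx => (hL x hx).trans (le_max_left _ _) }
  have hR' : S.R' = (1 - a) * R / m := by
    simp only [SurjectionData.R', S]; field_simp
  simpa only [hR'] using S.exists_continuousOn_rightInverse

/-- Local surjection theorem with continuous right-inverse. -/
theorem stmt_1 {X Y : Type*} [NormedAddCommGroup X] [NormedSpace ℝ X] [CompleteSpace X]
    [NormedAddCommGroup Y] [NormedSpace ℝ Y] [CompleteSpace Y]
    (R m a : ℝ) (hR : 0 < R) (ha : a < 1)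
    (f : X → Y) (hf0 : f 0 = 0)
    (hlip : ∃ K : NNReal, LipschitzOnWith K f (ball (0 : X) R))
    (Df : X → X →L[ℝ] Y)
    (hG : ∀ x ∈ ball (0 : X) R, GateauxAt f (Df x) x)
    (L : X → Y →L[ℝ] X)
    (happrox : ∀ x ∈ ball (0 : X) R, ∀ w : Y, ∃ α > (0 : ℝ), ∀ x' : X, ‖x' - x‖ < α →
      x' ∈ ball (0 : X) R ∧ ‖Df x' (L x w) - w‖ ≤ a * ‖w‖)
    (hsup : ∃ m₀ < m, ∀ x ∈ ball (0 : X) R, ‖L x‖ ≤ m₀) :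
    ∃ g : Y → X, ContinuousOn g (ball (0 : Y) ((1 - a) * R / m)) ∧
      ∀ y ∈ ball (0 : Y) ((1 - a) * R / m),
        g y ∈ ball (0 : X) R ∧ f (g y) = y ∧ ‖g y‖ ≤ (m / (1 - a)) * ‖y‖ :=
  stmt_1_general R m a hR ha f hf0 hlip Df hG L happrox hsup
end

section
/- Under the hypotheses of the continuous-inverse theorem (f : B_X(0,R) → Y Lipschitz, Gâteaux-differentiable, f(0)=0, the approximate right-inverse condition with constant a < 1, and sup ‖L(x)‖ < m), if in addition f is Fréchet differentiable on B, Df(x) has a left-inverse for all x ∈ B, and there is a non-decreasing ε : (0,∞) → (0,∞) with ε(t) → 0 as t → 0 such that ‖f(x₂) − f(x₁) − Df(x₁)(x₂ − x₁)‖ ≤ ε(‖x₂ − x₁‖)‖x₂ − x₁‖ for all x₁, x₂ ∈ B, then any two continuous right-inverses g₁, g₂ : B' → B of f with g₁(0) = g₂(0) = 0 are equal on B' = B_Y(0, (1−a)R/m). -/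
open Filter Metric

/-!
The Taylor estimate with a modulus `ε → 0` that does not depend on the base point makes `Df`
continuous, so `f` is strictly differentiable on the ball. Where `Df x` has a left inverse, `f` is
then injective near `x`. Hence, if `g₁ y = g₂ y`, the right inverses `g₁`, `g₂` agree near `y`:
the coincidence set of `g₁` and `g₂` is open in the ball `B'`, it is relatively closed by
continuity, and it contains `0`; since `B'` is connected, it is all of `B'`.
-/

open Set Topology NNReal

section

variable {𝕜 E F : Type*} [NontriviallyNormedField 𝕜]
  [NormedAddCommGroup E] [NormedSpace 𝕜 E] [NormedAddCommGroup F] [NormedSpace 𝕜 F]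

def HasUniformFDerivOn (f : E → F) (Df : E → E →L[𝕜] F) (s : Set E) : Prop :=
  ∀ c > (0 : ℝ), ∃ δ > 0, ∀ x₁ ∈ s, ∀ x₂ ∈ s, ‖x₂ - x₁‖ < δ →
    ‖f x₂ - f x₁ - Df x₁ (x₂ - x₁)‖ ≤ c * ‖x₂ - x₁‖

namespace HasUniformFDerivOn

variable {f : E → F} {Df : E → E →L[𝕜] F} {s : Set E}

theorem of_modulus {ε : ℝ → ℝ} (hε : Tendsto ε (𝓝[>] 0) (𝓝 0))
    (hT : ∀ x₁ ∈ s, ∀ x₂ ∈ s, ‖f x₂ - f x₁ - Df x₁ (x₂ - x₁)‖ ≤ ε ‖x₂ - x₁‖ * ‖x₂ - x₁‖) :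
    HasUniformFDerivOn f Df s := by
  intro c hc
  obtain ⟨δ, hδ, hsmall⟩ :=
    mem_nhdsGT_iff_exists_Ioo_subset.1 (hε.eventually (gt_mem_nhds hc))
  refine ⟨δ, hδ, fun x₁ h₁ x₂ h₂ hd => (hT x₁ h₁ x₂ h₂).trans ?_⟩
  rcases (norm_nonneg (x₂ - x₁)).eq_or_lt with h0 | hpos
  · simp [← h0]
  · exact mul_le_mul_of_nonneg_right (hsmall ⟨hpos, hd⟩).le (norm_nonneg _)

/-- Comparing the Taylor expansions based at `x` and at `x₁` of the three points
`x`, `x₁`, `x₁ + w`. -/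
theorem norm_sub_apply_le {δ c : ℝ}
    (hrem : ∀ x₁ ∈ s, ∀ x₂ ∈ s, ‖x₂ - x₁‖ < δ → ‖f x₂ - f x₁ - Df x₁ (x₂ - x₁)‖ ≤ c * ‖x₂ - x₁‖)
    {x x₁ w : E} (hx : x ∈ s) (hx₁ : x₁ ∈ s) (hw : x₁ + w ∈ s)
    (h₁ : ‖x₁ - x‖ < δ) (h₂ : ‖x₁ + w - x‖ < δ) (h₃ : ‖w‖ < δ) :
    ‖(Df x₁ - Df x) w‖ ≤ c * (‖x₁ + w - x‖ + ‖w‖ + ‖x₁ - x‖) := by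
  have key : (Df x₁ - Df x) w = (f (x₁ + w) - f x - Df x (x₁ + w - x))
      - (f (x₁ + w) - f x₁ - Df x₁ (x₁ + w - x₁)) - (f x₁ - f x - Df x (x₁ - x)) := by
    simp only [sub_apply, map_sub, map_add, add_sub_cancel_left]
    abel
  have hA := hrem x hx _ hw h₂
  have hB := hrem x₁ hx₁ _ hw (by rwa [add_sub_cancel_left])
  have hC := hrem x hx x₁ hx₁ h₁
  rw [add_sub_cancel_left] at hB
  rw [key]
  calc _ ≤ ‖f (x₁ + w) - f x - Df x (x₁ + w - x)‖ + ‖f (x₁ + w) - f x₁ - Df x₁ w‖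
        + ‖f x₁ - f x - Df x (x₁ - x)‖ := by
          rw [add_sub_cancel_left]
          exact (norm_sub_le _ _).trans (add_le_add_left (norm_sub_le _ _) _)
    _ ≤ _ := by linarith

theorem continuousAt {x : E} (hf : HasUniformFDerivOn f Df s) (hs : s ∈ 𝓝 x) :
    ContinuousAt Df x := by
  obtain ⟨k, hk⟩ := NormedField.exists_one_lt_norm 𝕜
  have hk0 : 0 < ‖k‖ := one_pos.trans hk
  rw [Metric.continuousAt_iff]
  intro η hη
  obtain ⟨δ, hδ, hrem⟩ := hf (η / (8 * ‖k‖)) (by positivity)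
  obtain ⟨ρ, hρ, hball⟩ := Metric.mem_nhds_iff.1 hs
  set r := min (δ / 2) (ρ / 2)
  have hr : 0 < r := lt_min (half_pos hδ) (half_pos hρ)
  have hrδ : r ≤ δ / 2 := min_le_left _ _
  have hrρ : r ≤ ρ / 2 := min_le_right _ _
  refine ⟨r, hr, fun {x₁} hx₁ => ?_⟩
  rw [dist_eq_norm] at hx₁ ⊢
  refine lt_of_le_of_lt ?_ (half_lt_self hη)
  refine ContinuousLinearMap.opNorm_le_of_shell hr (half_pos hη).le hk fun w hw₁ hw₂ => ?_
  have hw : ‖x₁ + w - x‖ < 2 * r := by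
    calc ‖x₁ + w - x‖ = ‖(x₁ - x) + w‖ := by rw [sub_add_eq_add_sub]
      _ ≤ ‖x₁ - x‖ + ‖w‖ := norm_add_le _ _
      _ < 2 * r := by linarith
  have mem : ∀ z, ‖z - x‖ < 2 * r → z ∈ s := fun z hz =>
    hball (mem_ball_iff_norm.2 (by linarith))
  have hrw : r ≤ ‖k‖ * ‖w‖ := by rwa [div_le_iff₀' hk0] at hw₁
  calc ‖(Df x₁ - Df x) w‖ ≤ η / (8 * ‖k‖) * (‖x₁ + w - x‖ + ‖w‖ + ‖x₁ - x‖) :=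
        norm_sub_apply_le hrem (mem x (by simpa using hr)) (mem x₁ (by linarith)) (mem _ hw)
          (by linarith) (by linarith) (by linarith)
    _ ≤ η / (8 * ‖k‖) * (4 * (‖k‖ * ‖w‖)) := by gcongr; linarith
    _ = η / 2 * ‖w‖ := by field_simp; ring

end HasUniformFDerivOn

theorem ApproximatesLinearOn.injOn_of_leftInverse {f : E → F} {f' : E →L[𝕜] F} {s : Set E}
    {c : ℝ≥0} (hf : ApproximatesLinearOn f f' s c) {M : F →L[𝕜] E}
    (hM : Function.LeftInverse M f') (hc : ‖M‖ * c < 1) : InjOn f s := by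
  intro x hx y hy hxy
  have h : ‖x - y‖ ≤ ‖M‖ * c * ‖x - y‖ :=
    calc ‖x - y‖ = ‖M (f' (x - y))‖ := by rw [hM]
      _ ≤ ‖M‖ * ‖f' (x - y)‖ := M.le_opNorm _
      _ = ‖M‖ * ‖f x - f y - f' (x - y)‖ := by rw [hxy, sub_self, zero_sub, norm_neg]
      _ ≤ ‖M‖ * (c * ‖x - y‖) := by gcongr; exact hf x hx y hy
      _ = ‖M‖ * c * ‖x - y‖ := by ring
  have : ‖x - y‖ = 0 := by nlinarith [norm_nonneg (x - y)]
  exact sub_eq_zero.1 (norm_eq_zero.1 this)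

theorem HasStrictFDerivAt.exists_mem_nhds_injOn {f : E → F} {f' : E →L[𝕜] F} {x : E}
    (hf : HasStrictFDerivAt f f' x) {M : F →L[𝕜] E} (hM : Function.LeftInverse M f') :
    ∃ t ∈ 𝓝 x, InjOn f t := by
  obtain ⟨t, ht, happrox⟩ :=
    hf.approximates_deriv_on_nhds (c := (‖M‖₊ + 1)⁻¹) (Or.inr (by positivity))
  refine ⟨t, ht, happrox.injOn_of_leftInverse hM ?_⟩
  push_cast
  rw [← div_eq_mul_inv, div_lt_one (by positivity)]
  linarith

end

theorem eventuallyEq_of_injOn_of_rightInverse {α β : Type*} [TopologicalSpace α]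
    [TopologicalSpace β] {f : α → β} {g₁ g₂ : β → α} {t : Set α} {y : β}
    (hinj : InjOn f t) (ht : t ∈ 𝓝 (g₁ y)) (hg₁ : ContinuousAt g₁ y) (hg₂ : ContinuousAt g₂ y)
    (hy : g₁ y = g₂ y) (hfg₁ : ∀ᶠ z in 𝓝 y, f (g₁ z) = z) (hfg₂ : ∀ᶠ z in 𝓝 y, f (g₂ z) = z) :
    g₁ =ᶠ[𝓝 y] g₂ := by
  filter_upwards [hg₁ ht, hg₂ (hy ▸ ht), hfg₁, hfg₂] with z h₁ h₂ e₁ e₂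
  exact hinj h₁ h₂ (e₁.trans e₂.symm)

theorem IsPreconnected.eqOn_of_eventuallyEq_of_eq {α β : Type*} [TopologicalSpace α]
    [TopologicalSpace β] [T2Space β] {S : Set α} {g₁ g₂ : α → β} (hS : IsPreconnected S)
    (hSo : IsOpen S) (hg₁ : ContinuousOn g₁ S) (hg₂ : ContinuousOn g₂ S)
    (hloc : ∀ y ∈ S, g₁ y = g₂ y → g₁ =ᶠ[𝓝 y] g₂) {y₀ : α} (hy₀ : y₀ ∈ S)
    (h₀ : g₁ y₀ = g₂ y₀) : EqOn g₁ g₂ S := by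
  have hu : IsOpen {y | y ∈ S ∧ g₁ y = g₂ y} := by
    refine isOpen_iff_mem_nhds.2 fun y ⟨hy, hyeq⟩ => ?_
    filter_upwards [hSo.mem_nhds hy, hloc y hy hyeq] with z hz hzeq using ⟨hz, hzeq⟩
  have hv : IsOpen (S ∩ (fun y => (g₁ y, g₂ y)) ⁻¹' (diagonal β)ᶜ) :=
    (hg₁.prodMk hg₂).isOpen_inter_preimage hSo isClosed_diagonal.isOpen_compl
  have hsub := hS.subset_left_of_subset_union hu hv
    (Set.disjoint_left.2 fun y hy hy' => hy'.2 hy.2)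
    (fun y hy => (em (g₁ y = g₂ y)).imp (fun h => ⟨hy, h⟩) (fun h => ⟨hy, h⟩))
    ⟨y₀, hy₀, hy₀, h₀⟩
  exact fun y hy => (hsub hy).2

theorem stmt_2_general {X Y : Type*} [NormedAddCommGroup X] [NormedSpace ℝ X]
    [NormedAddCommGroup Y] [NormedSpace ℝ Y]
    (R m a : ℝ)
    (f : X → Y)
    (Df : X → X →L[ℝ] Y)
    (L : X → Y →L[ℝ] X)
    -- assumption (iv):
    (hFrechet : ∀ x ∈ ball (0 : X) R, HasFDerivAt f (Df x) x)
    (hleft : ∀ x ∈ ball (0 : X) R, ∃ M : Y →L[ℝ] X, ∀ h : X, M (Df x h) = h)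
    (ε : ℝ → ℝ)
    (hεlim : Tendsto ε (nhdsWithin 0 (Set.Ioi 0)) (nhds 0))
    (hTaylor : ∀ x₁ ∈ ball (0 : X) R, ∀ x₂ ∈ ball (0 : X) R,
      ‖f x₂ - f x₁ - Df x₁ (x₂ - x₁)‖ ≤ ε ‖x₂ - x₁‖ * ‖x₂ - x₁‖)
    -- two continuous right-inverses:
    (g₁ g₂ : Y → X)
    (hg₁c : ContinuousOn g₁ (ball (0 : Y) ((1 - a) * R / m)))
    (hg₂c : ContinuousOn g₂ (ball (0 : Y) ((1 - a) * R / m)))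
    (hg₁ : ∀ y ∈ ball (0 : Y) ((1 - a) * R / m), g₁ y ∈ ball (0 : X) R ∧ f (g₁ y) = y)
    (hg₂ : ∀ y ∈ ball (0 : Y) ((1 - a) * R / m), g₂ y ∈ ball (0 : X) R ∧ f (g₂ y) = y)
    (h₁0 : g₁ 0 = 0) (h₂0 : g₂ 0 = 0) :
    Set.EqOn g₁ g₂ (ball (0 : Y) ((1 - a) * R / m)) := by
  set B' := ball (0 : Y) ((1 - a) * R / m)
  rcases B'.eq_empty_or_nonempty with hempty | hne
  · simp [hempty]
  have hunif : HasUniformFDerivOn f Df (ball 0 R) := .of_modulus hεlim hTaylor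
  refine (convex_ball _ _).isPreconnected.eqOn_of_eventuallyEq_of_eq isOpen_ball hg₁c hg₂c
    (fun y hy hyeq => ?_) (mem_ball_self (nonempty_ball.1 hne)) (h₁0.trans h₂0.symm)
  have hB' : B' ∈ 𝓝 y := isOpen_ball.mem_nhds hy
  have hx : g₁ y ∈ ball 0 R := (hg₁ y hy).1
  have hball : ball (0 : X) R ∈ 𝓝 (g₁ y) := isOpen_ball.mem_nhds hx
  have hstrict : HasStrictFDerivAt f (Df (g₁ y)) (g₁ y) :=
    hasStrictFDerivAt_of_hasFDerivAt_of_continuousAt (eventually_of_mem hball hFrechet)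
      (hunif.continuousAt hball)
  obtain ⟨M, hM⟩ := hleft _ hx
  obtain ⟨t, ht, hinj⟩ := hstrict.exists_mem_nhds_injOn hM
  exact eventuallyEq_of_injOn_of_rightInverse hinj ht (hg₁c.continuousAt hB')
    (hg₂c.continuousAt hB') hyeq (eventually_of_mem hB' fun z hz => (hg₁ z hz).2)
    (eventually_of_mem hB' fun z hz => (hg₂ z hz).2)

/-- Uniqueness of the continuous right-inverse under the extra assumption (iv). -/
theorem stmt_2 {X Y : Type*} [NormedAddCommGroup X] [NormedSpace ℝ X] [CompleteSpace X]
    [NormedAddCommGroup Y] [NormedSpace ℝ Y] [CompleteSpace Y]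
    (R m a : ℝ) (hR : 0 < R) (ha : a < 1)
    (f : X → Y) (hf0 : f 0 = 0)
    (hlip : ∃ K : NNReal, LipschitzOnWith K f (ball (0 : X) R))
    (Df : X → X →L[ℝ] Y)
    (hG : ∀ x ∈ ball (0 : X) R, GateauxAt f (Df x) x)
    (L : X → Y →L[ℝ] X)
    (happrox : ∀ x ∈ ball (0 : X) R, ∀ w : Y, ∃ α > (0 : ℝ), ∀ x' : X, ‖x' - x‖ < α →
      x' ∈ ball (0 : X) R ∧ ‖Df x' (L x w) - w‖ ≤ a * ‖w‖)
    (hsup : ∃ m₀ < m, ∀ x ∈ ball (0 : X) R, ‖L x‖ ≤ m₀)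
    -- assumption (iv):
    (hFrechet : ∀ x ∈ ball (0 : X) R, HasFDerivAt f (Df x) x)
    (hleft : ∀ x ∈ ball (0 : X) R, ∃ M : Y →L[ℝ] X, ∀ h : X, M (Df x h) = h)
    (ε : ℝ → ℝ) (hεmono : ∀ s t : ℝ, 0 < s → s ≤ t → ε s ≤ ε t)
    (hεpos : ∀ t > (0 : ℝ), 0 < ε t)
    (hεlim : Tendsto ε (nhdsWithin 0 (Set.Ioi 0)) (nhds 0))
    (hTaylor : ∀ x₁ ∈ ball (0 : X) R, ∀ x₂ ∈ ball (0 : X) R,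
      ‖f x₂ - f x₁ - Df x₁ (x₂ - x₁)‖ ≤ ε ‖x₂ - x₁‖ * ‖x₂ - x₁‖)
    -- two continuous right-inverses:
    (g₁ g₂ : Y → X)
    (hg₁c : ContinuousOn g₁ (ball (0 : Y) ((1 - a) * R / m)))
    (hg₂c : ContinuousOn g₂ (ball (0 : Y) ((1 - a) * R / m)))
    (hg₁ : ∀ y ∈ ball (0 : Y) ((1 - a) * R / m), g₁ y ∈ ball (0 : X) R ∧ f (g₁ y) = y)
    (hg₂ : ∀ y ∈ ball (0 : Y) ((1 - a) * R / m), g₂ y ∈ ball (0 : X) R ∧ f (g₂ y) = y)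
    (h₁0 : g₁ 0 = 0) (h₂0 : g₂ 0 = 0) :
    Set.EqOn g₁ g₂ (ball (0 : Y) ((1 - a) * R / m)) :=
  stmt_2_general R m a f Df L hFrechet hleft ε hεlim hTaylor g₁ g₂ hg₁c hg₂c hg₁ hg₂ h₁0 h₂0
end

section
/- Let X, Y be Banach spaces, U ⊂ X open and connected, F : U → Y, and suppose: (1) for each x ∈ U, F has a Fréchet derivative DF(x) admitting a left-inverse L̂(x) ∈ L(Y,X) with sup_{x∈U} ‖L̂(x)‖ ≤ C; (2) there is a non-decreasing ε : (0,∞) → (0,∞) with ε(t) → 0 as t → 0 such that ‖F(x₂) − F(x₁) − DF(x₁)(x₂−x₁)‖ ≤ ε(‖x₂−x₁‖)‖x₂−x₁‖ for all x₁, x₂ ∈ U. If V ⊂ Y is connected, G₁, G₂ : V → U are continuous with F ∘ G₁ = F ∘ G₂ = id_V, and G₁(v₀) = G₂(v₀) for some v₀ ∈ V, then G₁ = G₂ on V. -/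
/-!
If `F (x₁) = F (x₂)`, the Taylor estimate gives `‖DF(x₁) d‖ ≤ ε(‖d‖) ‖d‖` for `d = x₂ - x₁`, and
the left inverse turns this into `‖d‖ ≤ C ε(‖d‖) ‖d‖`; once `C ε(‖d‖) < 1` this forces `d = 0`.
So there is `δ > 0` such that `G₁ v` and `G₂ v` are either equal or at distance at least `δ`.
The continuous function `v ↦ ‖G₁ v - G₂ v‖` on the connected set `V` vanishes at `v₀` and omits
the values in `(0, δ)`, hence vanishes identically.
-/

open Filter Set

theorem IsPreconnected.eqOn_of_dist_lt_imp_eq {α β : Type*} [TopologicalSpace α] [MetricSpace β]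
    {V : Set α} (hV : IsPreconnected V) {f g : α → β} (hf : ContinuousOn f V)
    (hg : ContinuousOn g V) {δ : ℝ} (hδ : 0 < δ)
    (hrigid : ∀ w ∈ V, dist (f w) (g w) < δ → f w = g w)
    {v₀ : α} (hv₀ : v₀ ∈ V) (h₀ : f v₀ = g v₀) : EqOn f g V := by
  intro w hw
  by_contra hne
  have hδw : δ ≤ dist (f w) (g w) := not_lt.1 fun hlt ↦ hne (hrigid w hw hlt)
  have hcont : ContinuousOn (fun v ↦ dist (f v) (g v)) V :=
    continuous_dist.comp_continuousOn (hf.prodMk hg)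
  obtain ⟨w', hw', hdist⟩ := (hV.image _ hcont).Icc_subset
    ⟨v₀, hv₀, dist_eq_zero.2 h₀⟩ ⟨w, hw, rfl⟩
    ⟨(half_pos hδ).le, (half_lt_self hδ).le.trans hδw⟩
  dsimp only at hdist
  have hw'eq := hrigid w' hw' (hdist ▸ half_lt_self hδ)
  rw [hw'eq, dist_self] at hdist
  linarith

section

variable {𝕜 E F : Type*} [NontriviallyNormedField 𝕜] [NormedAddCommGroup E] [NormedSpace 𝕜 E]
  [NormedAddCommGroup F] [NormedSpace 𝕜 F]

theorem ContinuousLinearMap.eq_zero_of_leftInverse_of_norm_apply_le {A : E →L[𝕜] F}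
    {L : F →L[𝕜] E} (hL : Function.LeftInverse L A) {C η : ℝ} (hLC : ‖L‖ ≤ C)
    (hCη : C * η < 1) {d : E} (hd : ‖A d‖ ≤ η * ‖d‖) : d = 0 := by
  have hC : 0 ≤ C := (norm_nonneg L).trans hLC
  have hcontract : ‖d‖ ≤ C * η * ‖d‖ :=
    calc ‖d‖ = ‖L (A d)‖ := by rw [hL d]
      _ ≤ ‖L‖ * ‖A d‖ := L.le_opNorm _
      _ ≤ C * (η * ‖d‖) := mul_le_mul hLC hd (norm_nonneg _) hC
      _ = C * η * ‖d‖ := (mul_assoc _ _ _).symm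
  exact norm_le_zero_iff.1 (by nlinarith [norm_nonneg d])

theorem eq_of_apply_eq_of_norm_sub_sub_le {f : E → F} {A : E →L[𝕜] F} {L : F →L[𝕜] E}
    (hL : Function.LeftInverse L A) {C η : ℝ} (hLC : ‖L‖ ≤ C) (hCη : C * η < 1) {x₁ x₂ : E}
    (hTaylor : ‖f x₂ - f x₁ - A (x₂ - x₁)‖ ≤ η * ‖x₂ - x₁‖) (hf : f x₁ = f x₂) : x₁ = x₂ :=
  (sub_eq_zero.1 <| A.eq_zero_of_leftInverse_of_norm_apply_le hL hLC hCη <| by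
    simpa only [hf, sub_self, zero_sub, norm_neg] using hTaylor).symm

end

theorem stmt_17_general {X Y : Type*} [NormedAddCommGroup X] [NormedSpace ℝ X]
    [NormedAddCommGroup Y] [NormedSpace ℝ Y]
    (U : Set X)
    (F : X → Y) (DF : X → X →L[ℝ] Y)
    (Lhat : X → Y →L[ℝ] X)
    (hleft : ∀ x ∈ U, ∀ h : X, Lhat x (DF x h) = h)
    (C : ℝ) (hC : ∀ x ∈ U, ‖Lhat x‖ ≤ C)
    (ε : ℝ → ℝ)
    (hεlim : Tendsto ε (nhdsWithin 0 (Set.Ioi 0)) (nhds 0))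
    (hTaylor : ∀ x₁ ∈ U, ∀ x₂ ∈ U,
      ‖F x₂ - F x₁ - DF x₁ (x₂ - x₁)‖ ≤ ε ‖x₂ - x₁‖ * ‖x₂ - x₁‖)
    (V : Set Y) (hVconn : IsConnected V)
    (G₁ G₂ : Y → X) (hG₁c : ContinuousOn G₁ V) (hG₂c : ContinuousOn G₂ V)
    (hG₁U : ∀ v ∈ V, G₁ v ∈ U) (hG₂U : ∀ v ∈ V, G₂ v ∈ U)
    (hG₁ : ∀ v ∈ V, F (G₁ v) = v) (hG₂ : ∀ v ∈ V, F (G₂ v) = v)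
    (v₀ : Y) (hv₀ : v₀ ∈ V) (hagree : G₁ v₀ = G₂ v₀) :
    Set.EqOn G₁ G₂ V := by
  have hCε : ∀ᶠ t in nhdsWithin 0 (Ioi 0), C * ε t < 1 := by
    have hlim : Tendsto (fun t ↦ C * ε t) (nhdsWithin 0 (Ioi 0)) (nhds 0) := by
      simpa using hεlim.const_mul C
    exact hlim.eventually (gt_mem_nhds one_pos)
  obtain ⟨δ, hδ, hsmall⟩ := mem_nhdsGT_iff_exists_Ioo_subset.1 hCε
  refine hVconn.isPreconnected.eqOn_of_dist_lt_imp_eq hG₁c hG₂c hδ (fun w hw hdist ↦ ?_) hv₀ hagree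
  by_contra hne
  have hd : ‖G₁ w - G₂ w‖ ∈ Ioo 0 δ :=
    ⟨norm_pos_iff.2 (sub_ne_zero.2 hne), by rwa [dist_eq_norm] at hdist⟩
  exact hne <| Eq.symm <| eq_of_apply_eq_of_norm_sub_sub_le (hleft _ (hG₂U w hw))
    (hC _ (hG₂U w hw)) (hsmall hd) (hTaylor _ (hG₂U w hw) _ (hG₁U w hw))
    ((hG₂ w hw).trans (hG₁ w hw).symm)

/-- Uniqueness of continuous right-inverses: open-closed argument. -/
theorem stmt_17 {X Y : Type*} [NormedAddCommGroup X] [NormedSpace ℝ X]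
    [NormedAddCommGroup Y] [NormedSpace ℝ Y]
    (U : Set X) (hU : IsOpen U) (hUconn : IsConnected U)
    (F : X → Y) (DF : X → X →L[ℝ] Y)
    (hFrechet : ∀ x ∈ U, HasFDerivAt F (DF x) x)
    (Lhat : X → Y →L[ℝ] X)
    (hleft : ∀ x ∈ U, ∀ h : X, Lhat x (DF x h) = h)
    (C : ℝ) (hC : ∀ x ∈ U, ‖Lhat x‖ ≤ C)
    (ε : ℝ → ℝ) (hεmono : ∀ s t : ℝ, 0 < s → s ≤ t → ε s ≤ ε t)
    (hεpos : ∀ t > (0 : ℝ), 0 < ε t)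
    (hεlim : Tendsto ε (nhdsWithin 0 (Set.Ioi 0)) (nhds 0))
    (hTaylor : ∀ x₁ ∈ U, ∀ x₂ ∈ U,
      ‖F x₂ - F x₁ - DF x₁ (x₂ - x₁)‖ ≤ ε ‖x₂ - x₁‖ * ‖x₂ - x₁‖)
    (V : Set Y) (hVconn : IsConnected V)
    (G₁ G₂ : Y → X) (hG₁c : ContinuousOn G₁ V) (hG₂c : ContinuousOn G₂ V)
    (hG₁U : ∀ v ∈ V, G₁ v ∈ U) (hG₂U : ∀ v ∈ V, G₂ v ∈ U)
    (hG₁ : ∀ v ∈ V, F (G₁ v) = v) (hG₂ : ∀ v ∈ V, F (G₂ v) = v)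
    (v₀ : Y) (hv₀ : v₀ ∈ V) (hagree : G₁ v₀ = G₂ v₀) :
    Set.EqOn G₁ G₂ V :=
  stmt_17_general U F DF Lhat hleft C hC ε hεlim hTaylor V hVconn G₁ G₂ hG₁c hG₂c hG₁U hG₂U hG₁ hG₂
    v₀ hv₀ hagree
end
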